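/- Let ξ₁, ξ₂, ξ₃ be three linearly independent lightlike (null) vectors in Minkowski space ℝ^{1+3}, let ξ₀ ∈ span(ξ₁, ξ₂, ξ₃) with ξ₀ ∉ span(ξ₂, ξ₃), and let U be a neighbourhood of ξ₁ within the light cone L. Then there exists a neighbourhood V ⊂ ℝ^{1+3} of ξ₀ such that for every ξ̃₀ ∈ V there exists ξ̃₁ ∈ U with ξ̃₀ ∈ span(ξ̃₁, ξ₂, ξ₃). -/
import Mathlib


/-- Minkowski quadratic form on ℝ^{1+3}. -/
def minkQ (x : Fin 4 → ℝ) : ℝ := -(x 0)^2 + (x 1)^2 + (x 2)^2 + (x 3)^2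

/-- The light cone: nonzero vectors with vanishing Minkowski form. -/
def lightCone : Set (Fin 4 → ℝ) := {x | x ≠ 0 ∧ minkQ x = 0}

/-- Minkowski bilinear form. -/
def minkB (x y : Fin 4 → ℝ) : ℝ := -(x 0 * y 0) + x 1 * y 1 + x 2 * y 2 + x 3 * y 3

lemma minkQ_add_smul (u v : Fin 4 → ℝ) (s : ℝ) :
    minkQ (u + s • v) = minkQ u + 2 * s * minkB u v + s ^ 2 * minkQ v := by
  simp only [minkQ, minkB, Pi.add_apply, Pi.smul_apply, smul_eq_mul]
  ring

lemma lightCone_zero_ne (x : Fin 4 → ℝ) (hx : x ∈ lightCone) : x 0 ≠ 0 := by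
  intro h0
  apply hx.1
  have hq := hx.2
  rw [minkQ, h0] at hq
  have h1 : x 1 = 0 := by nlinarith [sq_nonneg (x 1), sq_nonneg (x 2), sq_nonneg (x 3)]
  have h2 : x 2 = 0 := by nlinarith [sq_nonneg (x 1), sq_nonneg (x 2), sq_nonneg (x 3)]
  have h3 : x 3 = 0 := by nlinarith [sq_nonneg (x 1), sq_nonneg (x 2), sq_nonneg (x 3)]
  funext i
  fin_cases i
  exacts [h0, h1, h2, h3]

lemma null_orth (x y : Fin 4 → ℝ) (hx : x ∈ lightCone) (hy : y ∈ lightCone)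
    (hB : minkB x y = 0) : y = (y 0 / x 0) • x := by
  have hx0 := lightCone_zero_ne x hx
  have qx := hx.2
  have qy := hy.2
  rw [minkQ] at qx qy
  rw [minkB] at hB
  have key : (x 1 * y 2 - x 2 * y 1)^2 + (x 1 * y 3 - x 3 * y 1)^2
      + (x 2 * y 3 - x 3 * y 2)^2 = 0 := by
    linear_combination (y 1 ^ 2 + y 2 ^ 2 + y 3 ^ 2) * qx + x 0 ^ 2 * qy
      - (x 1 * y 1 + x 2 * y 2 + x 3 * y 3 + x 0 * y 0) * hB
  have s1 : x 1 * y 2 - x 2 * y 1 = 0 := by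
    have h : (x 1 * y 2 - x 2 * y 1) ^ 2 = 0 := le_antisymm
      (by nlinarith [sq_nonneg (x 1 * y 3 - x 3 * y 1), sq_nonneg (x 2 * y 3 - x 3 * y 2)])
      (sq_nonneg _)
    exact pow_eq_zero_iff (by norm_num) |>.mp h
  have s2 : x 1 * y 3 - x 3 * y 1 = 0 := by
    have h : (x 1 * y 3 - x 3 * y 1) ^ 2 = 0 := le_antisymm
      (by nlinarith [sq_nonneg (x 1 * y 2 - x 2 * y 1), sq_nonneg (x 2 * y 3 - x 3 * y 2)])
      (sq_nonneg _)
    exact pow_eq_zero_iff (by norm_num) |>.mp h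
  have s3 : x 2 * y 3 - x 3 * y 2 = 0 := by
    have h : (x 2 * y 3 - x 3 * y 2) ^ 2 = 0 := le_antisymm
      (by nlinarith [sq_nonneg (x 1 * y 2 - x 2 * y 1), sq_nonneg (x 1 * y 3 - x 3 * y 1)])
      (sq_nonneg _)
    exact pow_eq_zero_iff (by norm_num) |>.mp h
  have e1 : x 0 * (x 0 * y 1) = x 0 * (y 0 * x 1) := by
    linear_combination (-(y 1)) * qx - x 2 * s1 - x 3 * s2 + x 1 * hB
  have e2 : x 0 * (x 0 * y 2) = x 0 * (y 0 * x 2) := by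
    linear_combination (-(y 2)) * qx + x 1 * s1 - x 3 * s3 + x 2 * hB
  have e3 : x 0 * (x 0 * y 3) = x 0 * (y 0 * x 3) := by
    linear_combination (-(y 3)) * qx + x 1 * s2 + x 2 * s3 + x 3 * hB
  have e1' : x 0 * y 1 = y 0 * x 1 := mul_left_cancel₀ hx0 e1
  have e2' : x 0 * y 2 = y 0 * x 2 := mul_left_cancel₀ hx0 e2
  have e3' : x 0 * y 3 = y 0 * x 3 := mul_left_cancel₀ hx0 e3
  funext i
  fin_cases i <;> simp only [Fin.reduceFinMk, Fin.isValue, Pi.smul_apply, smul_eq_mul] <;> field_simp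
  · linear_combination e1'
  · linear_combination e2'
  · linear_combination e3' 

theorem stmt0 (ξ₀ ξ₁ ξ₂ ξ₃ : Fin 4 → ℝ)
    (h₁ : ξ₁ ∈ lightCone) (h₂ : ξ₂ ∈ lightCone) (h₃ : ξ₃ ∈ lightCone)
    (hind : LinearIndependent ℝ ![ξ₁, ξ₂, ξ₃])
    (hspan : ξ₀ ∈ Submodule.span ℝ {ξ₁, ξ₂, ξ₃})
    (hnot : ξ₀ ∉ Submodule.span ℝ {ξ₂, ξ₃})
    (U : Set (Fin 4 → ℝ)) (hU : U ⊆ lightCone)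
    (hUnbhd : U ∈ nhdsWithin ξ₁ lightCone) :
    ∃ V ∈ nhds ξ₀, ∀ ξ₀' ∈ V, ∃ ξ₁' ∈ U,
      ξ₀' ∈ Submodule.span ℝ {ξ₁', ξ₂, ξ₃} := by
  classical
  -- B(ξ₁, ξ₂) ≠ 0
  have hB12 : minkB ξ₁ ξ₂ ≠ 0 := by
    intro hB
    have := null_orth ξ₁ ξ₂ h₁ h₂ hB
    have hli := Fintype.linearIndependent_iff.mp hind ![ξ₂ 0 / ξ₁ 0, -1, 0]
    have : (ξ₂ 0 / ξ₁ 0) • ξ₁ + (-1 : ℝ) • ξ₂ + (0:ℝ) • ξ₃ = 0 := by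
      rw [← this]; abel_nf; simp
    have := hli (by simpa [Fin.sum_univ_three] using this) 1
    norm_num at this
  -- coefficients
  obtain ⟨a, z, hz, hξ₀⟩ := Submodule.mem_span_insert.mp hspan
  obtain ⟨b, c, hbc⟩ := Submodule.mem_span_pair.mp hz
  have ha : a ≠ 0 := by
    intro h
    apply hnot
    rw [h, zero_smul, zero_add] at hξ₀
    rwa [hξ₀]
  set w : (Fin 4 → ℝ) → (Fin 4 → ℝ) := fun v => a⁻¹ • (v - b • ξ₂ - c • ξ₃) with hw
  set t : (Fin 4 → ℝ) → ℝ := fun v => -(minkQ (w v)) / (2 * minkB (w v) ξ₂) with ht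
  set f : (Fin 4 → ℝ) → (Fin 4 → ℝ) := fun v => w v + t v • ξ₂ with hf
  have hwξ₀ : w ξ₀ = ξ₁ := by
    have h' : ξ₀ - b • ξ₂ - c • ξ₃ = a • ξ₁ := by rw [hξ₀, ← hbc]; abel
    simp [hw, h', smul_smul, inv_mul_cancel₀ ha]
  have htξ₀ : t ξ₀ = 0 := by simp [ht, hwξ₀, h₁.2]
  have hfξ₀ : f ξ₀ = ξ₁ := by simp [hf, htξ₀, hwξ₀]
  -- continuity
  have hcw : Continuous w := by fun_prop
  have hcQ : Continuous minkQ := by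
    unfold minkQ; fun_prop
  have hcB : Continuous fun v => minkB (w v) ξ₂ := by
    unfold minkB; fun_prop
  have hden : (2 * minkB (w ξ₀) ξ₂) ≠ 0 := by
    rw [hwξ₀]; exact mul_ne_zero two_ne_zero hB12
  have hct : ContinuousAt t ξ₀ :=
    ContinuousAt.div ((hcQ.comp hcw).neg.continuousAt)
      ((continuous_const.mul hcB).continuousAt) hden
  have hcf : ContinuousAt f ξ₀ :=
    (hcw.continuousAt).add (hct.smul continuousAt_const)
  -- neighborhoods
  obtain ⟨O, hOopen, hξ₁O, hOU⟩ := mem_nhdsWithin.mp hUnbhd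
  set O' : Set (Fin 4 → ℝ) := O ∩ {0}ᶜ with hO'
  have hO'open : IsOpen O' := hOopen.inter (isClosed_singleton.isOpen_compl)
  have hξ₁O' : ξ₁ ∈ O' := ⟨hξ₁O, h₁.1⟩
  set V : Set (Fin 4 → ℝ) := f ⁻¹' O' ∩ {v | minkB (w v) ξ₂ ≠ 0} with hV
  refine ⟨V, ?_, ?_⟩
  · apply Filter.inter_mem
    · exact hcf.preimage_mem_nhds (hO'open.mem_nhds (hfξ₀ ▸ hξ₁O'))
    · have : IsOpen {v | minkB (w v) ξ₂ ≠ 0} :=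
        isOpen_compl_singleton.preimage hcB
      exact this.mem_nhds (by rw [Set.mem_setOf_eq, hwξ₀]; exact hB12)
  · rintro ξ₀' ⟨hmem, hBne⟩
    have hBne : minkB (w ξ₀') ξ₂ ≠ 0 := hBne
    have hfq : minkQ (f ξ₀') = 0 := by
      simp only [hf, ht]
      rw [minkQ_add_smul, h₂.2]
      field_simp
      ring
    have hfne : f ξ₀' ≠ 0 := hmem.2
    have hfL : f ξ₀' ∈ lightCone := ⟨hfne, hfq⟩
    refine ⟨f ξ₀', hOU ⟨hmem.1, hfL⟩, ?_⟩
    have heq : ξ₀' = a • f ξ₀' + (b - a * t ξ₀') • ξ₂ + c • ξ₃ := by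
      funext i
      simp only [hf, hw, Pi.add_apply, Pi.smul_apply, Pi.sub_apply, smul_eq_mul]
      field_simp
      ring
    have hmem' : a • f ξ₀' + (b - a * t ξ₀') • ξ₂ + c • ξ₃ ∈
        Submodule.span ℝ {f ξ₀', ξ₂, ξ₃} := by
      refine Submodule.add_mem _ (Submodule.add_mem _ ?_ ?_) ?_
      · exact Submodule.smul_mem _ _ (Submodule.subset_span (by simp))
      · exact Submodule.smul_mem _ _ (Submodule.subset_span (by simp))
      · exact Submodule.smul_mem _ _ (Submodule.subset_span (by simp))
    rwa [← heq] at hmem'
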